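/- arXiv:2008.08961 — 2 statements merged into one kernel-verified Lean document; each statement's English description precedes it below -/
import Mathlib

section
/- Let Λ⟨Σ⟩* be the graded k-linear dual of the anti-commutative face coalgebra, made into a differential graded algebra with product defined by ⟨φψ, u⟩ = ⟨φ ⊗ ψ, Δu⟩ using the sign convention ⟨φ⊗ψ, b⊗c⟩ = (−1)^{deg ψ · deg b} ⟨φ,b⟩⟨ψ,c⟩, and differential defined by ⟨dφ, u⟩ = −(−1)^{deg φ} ⟨φ, d u⟩. Let (t^α) be the basis dual to (u_α) and set t_j = t^{e_j} for the j-th standard basis vector e_j of ℕ^m. Then: (i) t_j t_{j'} = −t_{j'} t_j for all j ≠ j'; (ii) d t_j = −2 t_j² for all j; and (iii) t_{j_1} ⋯ t_{j_k} = 0 for every non-face {j_1,…,j_k} ∉ Σ. -/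
noncomputable section

/-! ### The anti-commutative face coalgebra `Λ⟨Σ⟩` and its dual algebra -/

/-- The support of a multi-index `α : ℕ^m`, as a finset. -/
def suppOf {m : ℕ} (α : Fin m → ℕ) : Finset (Fin m) :=
  Finset.univ.filter fun j => α j ≠ 0

/-- Multi-indices `α ∈ ℕ^m` with `supp α ∈ Σ` and `|α| = n`; these index the basis `u_α`
of the degree-`n` part of the anti-commutative face coalgebra `Λ⟨Σ⟩`. -/
def FaceIndex (m : ℕ) (Sig : Set (Finset (Fin m))) (n : ℕ) : Type :=
  {α : Fin m → ℕ // suppOf α ∈ Sig ∧ ∑ j, α j = n}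

/-- `ε(α, j-1) = α_1 + ⋯ + α_{j-1}`. -/
def epsBelow {m : ℕ} (α : Fin m → ℕ) (j : Fin m) : ℕ :=
  ∑ i ∈ Finset.univ.filter (fun i => i < j), α i

/-- `ε(β,γ) = ∑_{j < j'} γ_j β_{j'}`. -/
def epsPair {m : ℕ} (β γ : Fin m → ℕ) : ℕ :=
  ∑ j' : Fin m, ∑ j ∈ Finset.univ.filter (fun j => j < j'), γ j * β j'

lemma suppOf_update_sub {m : ℕ} {Sig : Set (Finset (Fin m))}
    (hdown : ∀ σ ∈ Sig, ∀ τ ⊆ σ, τ ∈ Sig)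
    (α : Fin m → ℕ) (hα : suppOf α ∈ Sig) (j : Fin m) :
    suppOf (Function.update α j (α j - 1)) ∈ Sig := by
  refine hdown _ hα _ ?_
  intro i hi
  simp only [suppOf, Finset.mem_filter, Finset.mem_univ, true_and] at hi ⊢
  rcases eq_or_ne i j with rfl | hij
  · rw [Function.update_self] at hi; omega
  · rwa [Function.update_of_ne hij] at hi

lemma sum_update_sub {m : ℕ} (α : Fin m → ℕ) {n : ℕ} (hs : ∑ j, α j = n + 1)
    (j : Fin m) (hj : α j ≠ 0) :
    ∑ i, Function.update α j (α j - 1) i = n := by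
  rw [Finset.sum_update_of_mem (Finset.mem_univ j)]
  rw [Finset.sum_eq_sum_sdiff_singleton_add (Finset.mem_univ j) α] at hs
  omega

variable (k : Type) [CommRing k] (m : ℕ) (Sig : Set (Finset (Fin m)))

/-- The degree-`n` part of `Λ⟨Σ⟩`: free with basis the `u_α`, `supp α ∈ Σ`, `|α| = n`. -/
abbrev LamC (n : ℕ) : Type := FaceIndex m Sig n →₀ k

/-- The differential `d u_α = 2 ∑_{α_j > 0 even} (-1)^{ε(α,j-1)} u_{α|j}` of `Λ⟨Σ⟩`. -/
def Lamdiff (hdown : ∀ σ ∈ Sig, ∀ τ ⊆ σ, τ ∈ Sig) (n : ℕ) :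
    LamC k m Sig (n + 1) →ₗ[k] LamC k m Sig n :=
  (Finsupp.lift (LamC k m Sig n) k (FaceIndex m Sig (n + 1))) fun q =>
    ∑ j : Fin m,
      if hj : q.1 j ≠ 0 ∧ Even (q.1 j) then
        ((2 : k) * (-1 : k) ^ epsBelow q.1 j) •
          Finsupp.single
            (⟨Function.update q.1 j (q.1 j - 1),
              suppOf_update_sub hdown q.1 q.2.1 j,
              sum_update_sub q.1 q.2.2 j hj.1⟩) (1 : k)
      else 0

/-- The graded `k`-linear dual `Λ⟨Σ⟩*`. -/
abbrev DualLam (n : ℕ) : Type := LamC k m Sig n →ₗ[k] k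

open scoped Classical in
/-- The pairing of `φ ∈ (Λ⟨Σ⟩*)^p` against `u_β` (zero if `β` is not a degree-`p`
basis index). -/
def pairB {p : ℕ} (φ : DualLam k m Sig p) (β : Fin m → ℕ) : k :=
  if h : suppOf β ∈ Sig ∧ ∑ j, β j = p then φ (Finsupp.single ⟨β, h⟩ 1) else 0

/-- The product on `Λ⟨Σ⟩*` dual to the diagonal `Δ u_α = ∑_{β+γ=α} (-1)^{ε(β,γ)} u_β ⊗ u_γ`,
with the sign convention `⟨φ⊗ψ, b⊗c⟩ = (-1)^{deg ψ · deg b} ⟨φ,b⟩ ⟨ψ,c⟩`. -/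
def mulD (p q : ℕ) (φ : DualLam k m Sig p) (ψ : DualLam k m Sig q) :
    DualLam k m Sig (p + q) :=
  (Finsupp.lift k k (FaceIndex m Sig (p + q))) fun a =>
    ∑ b : (∀ j : Fin m, Fin (a.1 j + 1)),
      ((-1 : k) ^ epsPair (fun j => (b j : ℕ)) (fun j => a.1 j - (b j : ℕ)))
        * ((-1 : k) ^ (q * ∑ j, (b j : ℕ)))
        * pairB k m Sig φ (fun j => (b j : ℕ))
        * pairB k m Sig ψ (fun j => a.1 j - (b j : ℕ))

/-- The differential on the dual, `⟨dφ, u⟩ = -(-1)^{deg φ} ⟨φ, d u⟩`. -/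
def dualDiff (hdown : ∀ σ ∈ Sig, ∀ τ ⊆ σ, τ ∈ Sig) (n : ℕ)
    (φ : DualLam k m Sig n) : DualLam k m Sig (n + 1) :=
  (-(-1 : k) ^ n) • (φ.comp (Lamdiff k m Sig hdown n))

/-- The dual basis element `t_j = t^{e_j}` in degree `1`. -/
def tgen (j : Fin m) : DualLam k m Sig 1 :=
  (Finsupp.lift k k (FaceIndex m Sig 1)) fun a =>
    if a.1 = Pi.single j 1 then (1 : k) else 0

/-- The product `t_{j_k} ⋯ t_{j_1}` associated to a list `[j_1, …, j_k]`. -/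
def tprodList : (l : List (Fin m)) → DualLam k m Sig l.length
  | [] => (Finsupp.lift k k (FaceIndex m Sig 0)) fun _ => (1 : k)
  | j :: l => mulD k m Sig l.length 1 (tprodList l) (tgen k m Sig j)

/-!
Everything is checked on the basis `u_α`. Pairing a product `φ t_j` with `u_α` picks out the
single term `u_{α - e_j} ⊗ u_{e_j}` of the coproduct, so `⟨φ t_j, u_α⟩ = ±⟨φ, u_{α - e_j}⟩`
when `α_j > 0` and `0` otherwise. Hence `t_j t_{j'}` is `-(-1)^{[j' < j]}` times the dual of
`u_{e_j + e_{j'}}`, which gives the anticommutation, and `d t_j` is `2` times the dual of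
`u_{2 e_j}`, the only basis element whose boundary involves `u_{e_j}`. By induction on the word,
`t_{j_1} ⋯ t_{j_k}` is supported on the single multi-index counting the letters, whose support is
`{j_1, …, j_k}`; if that is a non-face there is no such basis element.
-/

open Finset

section

variable {k : Type} [CommRing k] {m : ℕ} {Sig : Set (Finset (Fin m))}

lemma suppOf_mono {α β : Fin m → ℕ} (h : β ≤ α) : suppOf β ⊆ suppOf α := by
  intro i
  simp only [suppOf, mem_filter, mem_univ, true_and]
  have : β i ≤ α i := h i
  omega

lemma suppOf_count (l : List (Fin m)) : suppOf (fun i => l.count i) = l.toFinset := by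
  ext i
  simp [suppOf, List.count_eq_zero]

lemma count_cons_eq_add_single (j : Fin m) (l : List (Fin m)) :
    (fun i => (j :: l).count i) = (fun i => l.count i) + Pi.single j 1 := by
  funext i
  rcases eq_or_ne i j with rfl | h
  · simp
  · simp [h, Ne.symm h]

lemma single_le_of_ne_zero {a : Fin m → ℕ} {j : Fin m} (ha : a j ≠ 0) :
    Pi.single j 1 ≤ a := by
  intro i
  rcases eq_or_ne i j with rfl | h
  · simp only [Pi.single_eq_same]; omega
  · simp [h]

lemma tsub_single_eq_iff {a : Fin m → ℕ} {j : Fin m} (ha : a j ≠ 0) (β : Fin m → ℕ) :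
    a - Pi.single j 1 = β ↔ a = β + Pi.single j 1 :=
  tsub_eq_iff_eq_add_of_le (single_le_of_ne_zero ha)

lemma sum_tsub_single {a : Fin m → ℕ} {p : ℕ} (hs : ∑ i, a i = p + 1) {j : Fin m}
    (ha : a j ≠ 0) : ∑ i, (a - Pi.single j 1 : Fin m → ℕ) i = p := by
  have hle := single_le_of_ne_zero ha
  simp only [Pi.sub_apply]
  rw [sum_tsub_distrib _ fun i _ => hle i, hs]
  simp

lemma tsub_eq_single_iff {a b : Fin m → ℕ} (hb : b ≤ a) (j : Fin m) :
    a - b = Pi.single j 1 ↔ a j ≠ 0 ∧ b = a - Pi.single j 1 := by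
  simp only [funext_iff, Pi.sub_apply, Pi.single_apply]
  constructor
  · intro h
    have hj := h j
    simp only [if_true] at hj
    refine ⟨by omega, fun i => ?_⟩
    have := h i
    have : b i ≤ a i := hb i
    split_ifs at * <;> omega
  · rintro ⟨hj, h⟩ i
    have := h i
    have : b i ≤ a i := hb i
    split_ifs at * with hij
    · subst hij; omega
    · omega

lemma update_tsub_one_eq (a : Fin m → ℕ) (j : Fin m) :
    Function.update a j (a j - 1) = a - Pi.single j 1 := by
  funext i
  rcases eq_or_ne i j with rfl | h
  · simp
  · simp [h]

lemma epsPair_single_single (j j' : Fin m) :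
    epsPair (Pi.single j 1 : Fin m → ℕ) (Pi.single j' 1) = if j' < j then 1 else 0 := by
  unfold epsPair
  rw [sum_eq_single j (fun i _ hi => by simp [hi]) (fun h => absurd (mem_univ j) h)]
  simp [sum_ite_eq', Pi.single_apply]

lemma Finsupp.lift_single_one {M X : Type} [AddCommMonoid M] [Module k M] (f : X → M) (a : X) :
    Finsupp.lift M k X f (Finsupp.single a 1) = f a := by
  simp [Finsupp.lift_apply, Finsupp.sum_single_index]

lemma DualLam.ext {n : ℕ} {φ ψ : DualLam k m Sig n}
    (h : ∀ a, φ (Finsupp.single a 1) = ψ (Finsupp.single a 1)) : φ = ψ :=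
  Finsupp.lhom_ext' fun a => LinearMap.ext_ring (h a)

lemma pairB_coe {n : ℕ} (φ : DualLam k m Sig n) (a : FaceIndex m Sig n) :
    pairB k m Sig φ a.1 = φ (Finsupp.single a 1) := by
  rw [pairB, dif_pos a.2]
  rfl

lemma pairB_tgen {γ : Fin m → ℕ} (hγ : suppOf γ ∈ Sig) (j : Fin m) :
    pairB k m Sig (tgen k m Sig j) γ = if γ = Pi.single j 1 then 1 else 0 := by
  by_cases hsum : ∑ i, γ i = 1
  · rw [pairB_coe (a := ⟨γ, hγ, hsum⟩)]
    exact Finsupp.lift_single_one _ _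
  · rw [pairB, dif_neg (fun h => hsum h.2), if_neg]
    rintro rfl
    simp at hsum

lemma mulD_tgen_apply_single (hdown : ∀ σ ∈ Sig, ∀ τ ⊆ σ, τ ∈ Sig) {p : ℕ}
    (φ : DualLam k m Sig p) (j : Fin m) (a : FaceIndex m Sig (p + 1)) :
    mulD k m Sig p 1 φ (tgen k m Sig j) (Finsupp.single a 1) =
      if a.1 j = 0 then 0 else
        (-1) ^ epsPair (a.1 - Pi.single j 1) (Pi.single j 1) * (-1) ^ p
          * pairB k m Sig φ (a.1 - Pi.single j 1) := by
  let b₀ : ∀ i, Fin (a.1 i + 1) :=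
    fun i => ⟨(a.1 - Pi.single j 1 : Fin m → ℕ) i, by simp⟩
  have hpair : ∀ b : ∀ i, Fin (a.1 i + 1),
      pairB k m Sig (tgen k m Sig j) (fun i => a.1 i - b i) =
        if a.1 j ≠ 0 ∧ b = b₀ then 1 else 0 := by
    intro b
    have hb : (fun i => (b i : ℕ)) ≤ a.1 := fun i => Nat.lt_succ_iff.mp (b i).isLt
    have hface := hdown _ a.2.1 _ (suppOf_mono (tsub_le_self (b := fun i => (b i : ℕ))))
    change pairB k m Sig (tgen k m Sig j) (a.1 - fun i => (b i : ℕ)) = _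
    rw [pairB_tgen hface]
    simp only [tsub_eq_single_iff hb, funext_iff, Fin.ext_iff, b₀]
  rw [mulD, Finsupp.lift_single_one, sum_eq_single b₀]
  · rw [hpair]
    by_cases ha : a.1 j = 0
    · rw [if_neg (fun h => h.1 ha), mul_zero, if_pos ha]
    have hle := single_le_of_ne_zero ha
    have hb₀ : (fun i => (b₀ i : ℕ)) = a.1 - Pi.single j 1 := rfl
    have hc : (fun i => a.1 i - b₀ i) = Pi.single j 1 := tsub_tsub_cancel_of_le hle
    have hsum : ∑ i, (b₀ i : ℕ) = p := sum_tsub_single a.2.2 ha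
    rw [if_pos ⟨ha, rfl⟩, if_neg ha, hb₀, hc, hsum, one_mul, mul_one]
  · intro b _ hb
    rw [hpair, if_neg (fun h => hb h.2), mul_zero]
  · exact fun h => absurd (mem_univ b₀) h

lemma mulD_tgen_tgen_apply_single (hdown : ∀ σ ∈ Sig, ∀ τ ⊆ σ, τ ∈ Sig) (j j' : Fin m)
    (a : FaceIndex m Sig (1 + 1)) :
    mulD k m Sig 1 1 (tgen k m Sig j) (tgen k m Sig j') (Finsupp.single a 1) =
      if a.1 = Pi.single j 1 + Pi.single j' 1 then
        -(-1) ^ epsPair (Pi.single j 1 : Fin m → ℕ) (Pi.single j' 1)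
      else 0 := by
  rw [mulD_tgen_apply_single hdown]
  by_cases ha : a.1 j' = 0
  · rw [if_pos ha, if_neg]
    rintro h
    simp [h] at ha
  · rw [if_neg ha, pairB_tgen (hdown _ a.2.1 _ (suppOf_mono tsub_le_self))]
    simp only [tsub_single_eq_iff ha]
    split_ifs with h
    · rw [h, add_tsub_cancel_right]
      ring
    · rw [mul_zero]

lemma dualDiff_apply_single (hdown : ∀ σ ∈ Sig, ∀ τ ⊆ σ, τ ∈ Sig) {n : ℕ}
    (φ : DualLam k m Sig n) (a : FaceIndex m Sig (n + 1)) :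
    dualDiff k m Sig hdown n φ (Finsupp.single a 1) =
      -(-1) ^ n * ∑ i, if a.1 i ≠ 0 ∧ Even (a.1 i) then
        2 * (-1) ^ epsBelow a.1 i * pairB k m Sig φ (a.1 - Pi.single i 1) else 0 := by
  rw [dualDiff, LinearMap.smul_apply, LinearMap.comp_apply, Lamdiff, Finsupp.lift_single_one,
    map_sum, smul_eq_mul]
  congr 1
  refine sum_congr rfl fun i _ => ?_
  split_ifs with hi
  · rw [map_smul, smul_eq_mul]
    simp only [update_tsub_one_eq]
    exact congrArg _ (pairB_coe φ _).symm
  · exact map_zero φ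

lemma dualDiff_tgen_apply_single (hdown : ∀ σ ∈ Sig, ∀ τ ⊆ σ, τ ∈ Sig) (j : Fin m)
    (a : FaceIndex m Sig (1 + 1)) :
    dualDiff k m Sig hdown 1 (tgen k m Sig j) (Finsupp.single a 1) =
      if a.1 = Pi.single j 1 + Pi.single j 1 then 2 else 0 := by
  have hface : ∀ i, suppOf (a.1 - Pi.single i 1) ∈ Sig :=
    fun i => hdown _ a.2.1 _ (suppOf_mono tsub_le_self)
  rw [dualDiff_apply_single, sum_eq_single j]
  · by_cases h2 : a.1 = Pi.single j 1 + Pi.single j 1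
    · have haj : a.1 j = 2 := by simp [h2]
      have heps : epsBelow a.1 j = 0 :=
        sum_eq_zero fun i hi => by simp [h2, (mem_filter.1 hi).2.ne]
      have hsub : a.1 - Pi.single j 1 = Pi.single j 1 := by
        simp only [h2, add_tsub_cancel_right]
      rw [if_pos (by rw [haj]; decide), pairB_tgen (hface j), if_pos hsub, heps, if_pos h2]
      norm_num
    · rw [if_neg h2]
      split_ifs with h1
      · rw [pairB_tgen (hface j), if_neg (by rwa [tsub_single_eq_iff h1.1]), mul_zero, mul_zero]
      · rw [mul_zero]
  · intro i _ hij
    rw [ite_eq_right_iff]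
    rintro ⟨hi, heven⟩
    rw [pairB_tgen (hface i), if_neg, mul_zero]
    intro h
    have hi1 := congrFun h i
    simp only [Pi.sub_apply, Pi.single_eq_same, Pi.single_eq_of_ne hij] at hi1
    rw [Nat.even_iff] at heven
    omega
  · exact fun h => absurd (mem_univ j) h

lemma pairB_tprodList_eq_zero (hdown : ∀ σ ∈ Sig, ∀ τ ⊆ σ, τ ∈ Sig) (l : List (Fin m))
    {β : Fin m → ℕ} (hβ : β ≠ fun i => l.count i) :
    pairB k m Sig (tprodList k m Sig l) β = 0 := by
  induction l generalizing β with
  | nil =>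
    rw [pairB, dif_neg]
    rintro ⟨-, hsum⟩
    exact hβ (funext fun i => by simpa using sum_eq_zero_iff.1 hsum i (mem_univ i))
  | cons j l ih =>
    rw [pairB]
    split_ifs with h
    · rw [tprodList, mulD_tgen_apply_single hdown _ j ⟨β, h⟩]
      split_ifs with hj
      · rfl
      · rw [ih, mul_zero]
        rwa [Ne, tsub_single_eq_iff hj, ← count_cons_eq_add_single]
    · rfl

end

theorem dual_face_coalgebra_relations_general
    (k : Type) [CommRing k] (m : ℕ) (Sig : Set (Finset (Fin m)))
    (hdown : ∀ σ ∈ Sig, ∀ τ ⊆ σ, τ ∈ Sig) :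
    (∀ j j' : Fin m, j ≠ j' →
        mulD k m Sig 1 1 (tgen k m Sig j) (tgen k m Sig j')
          = - mulD k m Sig 1 1 (tgen k m Sig j') (tgen k m Sig j)) ∧
    (∀ j : Fin m,
        dualDiff k m Sig hdown 1 (tgen k m Sig j)
          = (-2 : k) • mulD k m Sig 1 1 (tgen k m Sig j) (tgen k m Sig j)) ∧
    (∀ l : List (Fin m), l.Nodup → l.toFinset ∉ Sig → tprodList k m Sig l = 0) := by
  refine ⟨fun j j' hjj' => DualLam.ext fun a => ?_, fun j => DualLam.ext fun a => ?_,
    fun l _ hl => DualLam.ext fun a => ?_⟩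
  · rw [LinearMap.neg_apply, mulD_tgen_tgen_apply_single hdown,
      mulD_tgen_tgen_apply_single hdown, add_comm (Pi.single j' 1)]
    split_ifs
    · rw [epsPair_single_single, epsPair_single_single]
      rcases hjj'.lt_or_gt with h | h <;> simp [h, h.not_gt]
    · rw [neg_zero]
  · rw [LinearMap.smul_apply, dualDiff_tgen_apply_single hdown,
      mulD_tgen_tgen_apply_single hdown, epsPair_single_single, if_neg (lt_irrefl j)]
    split_ifs <;> norm_num
  · refine (pairB_coe _ a).symm.trans (pairB_tprodList_eq_zero hdown l fun h => hl ?_)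
    rw [← suppOf_count, ← h]
    exact a.2.1

/-- In the differential graded dual `Λ⟨Σ⟩*` of the anti-commutative
face coalgebra of a simplicial complex `Σ`:
(i) the degree-one elements `t_j` pairwise anti-commute;
(ii) `d t_j = -2 t_j²`;
(iii) the product of the `t_j` over any non-face of `Σ` vanishes. -/
theorem dual_face_coalgebra_relations
    (k : Type) [CommRing k] (m : ℕ) (Sig : Set (Finset (Fin m)))
    (hempty : ∅ ∈ Sig) (hdown : ∀ σ ∈ Sig, ∀ τ ⊆ σ, τ ∈ Sig) :
    (∀ j j' : Fin m, j ≠ j' →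
        mulD k m Sig 1 1 (tgen k m Sig j) (tgen k m Sig j')
          = - mulD k m Sig 1 1 (tgen k m Sig j') (tgen k m Sig j)) ∧
    (∀ j : Fin m,
        dualDiff k m Sig hdown 1 (tgen k m Sig j)
          = (-2 : k) • mulD k m Sig 1 1 (tgen k m Sig j) (tgen k m Sig j)) ∧
    (∀ l : List (Fin m), l.Nodup → l.toFinset ∉ Sig → tprodList k m Sig l = 0) :=
  dual_face_coalgebra_relations_general k m Sig hdown

end
end

section
/- Let 𝐙_Σ = { x ∈ ℝ^m : {j : x_j = 0} ∈ Σ } be the complement of the real coordinate subspace arrangement determined by Σ; it contains Z_Σ and carries the coordinatewise sign action of G = {±1}^m. If K ≤ G acts freely on Z_Σ, then the inclusion Z_Σ/K ↪ 𝐙_Σ/K is a strong deformation retract: there exists a homotopy F : (𝐙_Σ/K) × [0,1] → 𝐙_Σ/K with F(·,0) the identity, F(·,1) taking values in Z_Σ/K, and F(z,t) = z for all z ∈ Z_Σ/K and all t; moreover F can be chosen equivariant for the induced action of G/K. In particular, Z_Σ/K → 𝐙_Σ/K is a homotopy equivalence. -/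
noncomputable section


/-! ### The real moment-angle complex and real toric spaces -/

/-- The 2-torus `G = (ℤ/2)^m`. -/
abbrev Gtorus (m : ℕ) : Type := Fin m → ZMod 2

/-- The action of `(ℤ/2)^m` on `ℝ^m` by coordinatewise sign changes. -/
def signAct {m : ℕ} (g : Gtorus m) (x : Fin m → ℝ) : Fin m → ℝ :=
  fun j => if g j = 0 then x j else - x j

lemma zmod2_cases : ∀ a : ZMod 2, a = 0 ∨ a = 1 := by decide

lemma signAct_zero {m : ℕ} (x : Fin m → ℝ) : signAct (0 : Gtorus m) x = x := by
  funext j; simp [signAct]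

lemma signAct_add {m : ℕ} (g g' : Gtorus m) (x : Fin m → ℝ) :
    signAct (g + g') x = signAct g (signAct g' x) := by
  have h2 : (1 + 1 : ZMod 2) = 0 := by decide
  have h1 : (1 : ZMod 2) ≠ 0 := by decide
  funext j
  show (if g j + g' j = 0 then x j else - x j) = _
  rcases zmod2_cases (g j) with h | h <;> rcases zmod2_cases (g' j) with h' | h' <;>
    simp [signAct, h, h', h2, h1]

lemma add_self_eq_zero' {m : ℕ} (g : Gtorus m) : g + g = 0 := by
  funext j
  show g j + g j = 0
  rcases zmod2_cases (g j) with h | h <;> rw [h] <;> decide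

lemma signAct_invol {m : ℕ} (g : Gtorus m) (x : Fin m → ℝ) :
    signAct g (signAct g x) = x := by
  rw [← signAct_add, add_self_eq_zero', signAct_zero]

/-- The real moment-angle complex `Z_Σ ⊆ [-1,1]^m ⊆ ℝ^m`. -/
def Zma (m : ℕ) (Sig : Set (Finset (Fin m))) : Set (Fin m → ℝ) :=
  ⋃ σ ∈ Sig, {x | (∀ j, x j ∈ Set.Icc (-1 : ℝ) 1) ∧ ∀ j ∉ σ, x j = 1 ∨ x j = -1}

lemma signAct_mem_Zma {m : ℕ} {Sig : Set (Finset (Fin m))} (g : Gtorus m)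
    {x : Fin m → ℝ} (hx : x ∈ Zma m Sig) : signAct g x ∈ Zma m Sig := by
  obtain ⟨S, ⟨σ, rfl⟩, hS⟩ := hx
  simp only [Set.mem_iUnion] at hS
  obtain ⟨hσ, hIcc, hbd⟩ := hS
  refine Set.mem_iUnion.2 ⟨σ, Set.mem_iUnion.2 ⟨hσ, ?_, ?_⟩⟩
  · intro j
    have := hIcc j
    simp only [Set.mem_Icc] at this ⊢
    unfold signAct
    split <;> constructor <;> linarith [this.1, this.2]
  · intro j hj
    rcases hbd j hj with h | h <;> unfold signAct <;> split <;> simp [h]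

/-- The orbit equivalence relation of a subgroup `K ≤ (ℤ/2)^m` on `Z_Σ`. -/
def zSetoid (m : ℕ) (Sig : Set (Finset (Fin m))) (K : AddSubgroup (Gtorus m)) :
    Setoid (Zma m Sig) where
  r x y := ∃ g ∈ K, signAct g x.1 = y.1
  iseqv := by
    constructor
    · exact fun x => ⟨0, K.zero_mem, signAct_zero _⟩
    · rintro x y ⟨g, hg, h⟩
      exact ⟨g, hg, by rw [← h, signAct_invol]⟩
    · rintro x y z ⟨g, hg, h⟩ ⟨g', hg', h'⟩
      exact ⟨g' + g, K.add_mem hg' hg, by rw [signAct_add, h, h']⟩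

/-- The real toric space `X_Σ = Z_Σ / K`, with the quotient topology. -/
def RealToricSpace (m : ℕ) (Sig : Set (Finset (Fin m))) (K : AddSubgroup (Gtorus m)) : Type :=
  Quotient (zSetoid m Sig K)

instance (m : ℕ) (Sig : Set (Finset (Fin m))) (K : AddSubgroup (Gtorus m)) :
    TopologicalSpace (RealToricSpace m Sig K) :=
  instTopologicalSpaceQuotient

open scoped Classical in
/-- The complement `𝐙_Σ = { x ∈ ℝ^m : {j : x_j = 0} ∈ Σ }` of the real coordinate
subspace arrangement determined by `Σ`. -/
def bigZ (m : ℕ) (Sig : Set (Finset (Fin m))) : Set (Fin m → ℝ) :=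
  {x | (Finset.univ.filter fun j => x j = 0) ∈ Sig}

lemma signAct_mem_bigZ {m : ℕ} {Sig : Set (Finset (Fin m))} (g : Gtorus m)
    {x : Fin m → ℝ} (hx : x ∈ bigZ m Sig) : signAct g x ∈ bigZ m Sig := by
  classical
  show (Finset.univ.filter fun j => signAct g x j = 0) ∈ Sig
  have : (Finset.univ.filter fun j => signAct g x j = 0)
      = (Finset.univ.filter fun j => x j = 0) := by
    apply Finset.filter_congr
    intro j _
    unfold signAct
    split <;> simp
  rw [this]
  exact hx

lemma Zma_subset_bigZ {m : ℕ} {Sig : Set (Finset (Fin m))}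
    (hdown : ∀ σ ∈ Sig, ∀ τ ⊆ σ, τ ∈ Sig) :
    Zma m Sig ⊆ bigZ m Sig := by
  classical
  rintro x hx
  obtain ⟨S, ⟨σ, rfl⟩, hS⟩ := hx
  simp only [Set.mem_iUnion] at hS
  obtain ⟨hσ, _, hbd⟩ := hS
  refine hdown σ hσ _ ?_
  intro j hj
  simp only [Finset.mem_filter, Finset.mem_univ, true_and] at hj
  by_contra hjσ
  rcases hbd j hjσ with h | h <;> rw [hj] at h <;> norm_num at h

/-- The orbit relation of `K` on `𝐙_Σ`. -/
def bigSetoid (m : ℕ) (Sig : Set (Finset (Fin m))) (K : AddSubgroup (Gtorus m)) :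
    Setoid (bigZ m Sig) where
  r x y := ∃ g ∈ K, signAct g x.1 = y.1
  iseqv := by
    constructor
    · exact fun x => ⟨0, K.zero_mem, signAct_zero _⟩
    · rintro x y ⟨g, hg, h⟩
      exact ⟨g, hg, by rw [← h, signAct_invol]⟩
    · rintro x y z ⟨g, hg, h⟩ ⟨g', hg', h'⟩
      exact ⟨g' + g, K.add_mem hg' hg, by rw [signAct_add, h, h']⟩

/-- The quotient `𝐙_Σ/K` with its quotient topology. -/
def BigQuot (m : ℕ) (Sig : Set (Finset (Fin m))) (K : AddSubgroup (Gtorus m)) : Type :=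
  Quotient (bigSetoid m Sig K)

instance (m : ℕ) (Sig : Set (Finset (Fin m))) (K : AddSubgroup (Gtorus m)) :
    TopologicalSpace (BigQuot m Sig K) := instTopologicalSpaceQuotient

/-- The inclusion `Z_Σ/K ↪ 𝐙_Σ/K`. -/
def subQuot (m : ℕ) (Sig : Set (Finset (Fin m))) (K : AddSubgroup (Gtorus m))
    (hdown : ∀ σ ∈ Sig, ∀ τ ⊆ σ, τ ∈ Sig) :
    RealToricSpace m Sig K → BigQuot m Sig K :=
  Quotient.map (fun z => ⟨z.1, Zma_subset_bigZ hdown z.2⟩)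
    (by rintro z z' ⟨g, hg, h⟩; exact ⟨g, hg, h⟩)

/-- The action of `G = (ℤ/2)^m` on `𝐙_Σ/K` descending to the induced `G/K`-action. -/
def bigAct (m : ℕ) (Sig : Set (Finset (Fin m))) (K : AddSubgroup (Gtorus m))
    (g : Gtorus m) : BigQuot m Sig K → BigQuot m Sig K :=
  Quotient.map (fun z => ⟨signAct g z.1, signAct_mem_bigZ g z.2⟩)
    (by
      rintro z z' ⟨κ, hκ, h⟩
      refine ⟨κ, hκ, ?_⟩
      show signAct κ (signAct g z.1) = signAct g z'.1
      rw [← signAct_add, add_comm, signAct_add, h])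

/-! The coordinates of a point of `𝐙_Σ` vanish on a face of `Σ`, so `ν(x)`, the largest
over `σ ∈ Σ` of `min(1, |x_j| : j ∉ σ)`, is positive; it equals `1` on `Z_Σ`. Dividing each
`x_j` by `max(|x_j|, ν(x))` lands in `Z_Σ`: coordinates outside a maximising face become `±1`.
The straight line from `x` to this point rescales every coordinate by a positive factor, so it
stays in `𝐙_Σ`, fixes `Z_Σ`, and commutes with sign changes because the factors only see
`|x_j|`. Being `G`-equivariant, it descends to the quotients by `K`. -/

def ContinuousMap.quotientProdMap {X Y : Type*} [TopologicalSpace X] [TopologicalSpace Y]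
    [LocallyCompactSpace Y] (s : Setoid X) (H : C(X × Y, X))
    (hH : ∀ y x x', s x x' → s (H (x, y)) (H (x', y))) : C(Quotient s × Y, Quotient s) where
  toFun p := Quotient.map (fun x => H (x, p.2)) (hH p.2) p.1
  continuous_toFun := isQuotientMap_quotient_mk'.continuous_lift_prod_left <|
    continuous_quotient_mk'.comp H.continuous

def ContinuousMap.HomotopyEquiv.ofDeformationRetract {A X : Type*} [TopologicalSpace A]
    [TopologicalSpace X] (i : C(A, X)) (r : C(X, A)) (hri : ∀ a, r (i a) = a)
    (F : C(X × unitInterval, X)) (hF₀ : ∀ x, F (x, 0) = x)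
    (hF₁ : ∀ x, F (x, 1) = i (r x)) :
    ContinuousMap.HomotopyEquiv A X where
  toFun := i
  invFun := r
  left_inv := by
    rw [show r.comp i = ContinuousMap.id A from ContinuousMap.ext hri]
  right_inv := ⟨ContinuousMap.Homotopy.symm
    { toContinuousMap := F.comp ContinuousMap.prodSwap
      map_zero_left := hF₀
      map_one_left := hF₁ }⟩

variable {m : ℕ} {Sig : Set (Finset (Fin m))}

lemma mem_Zma_iff {x : Fin m → ℝ} : x ∈ Zma m Sig ↔ ∃ σ ∈ Sig,
    (∀ j, x j ∈ Set.Icc (-1 : ℝ) 1) ∧ ∀ j ∉ σ, x j = 1 ∨ x j = -1 := by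
  simp only [Zma, Set.mem_iUnion, Set.mem_ofPred_eq, exists_prop]

lemma abs_signAct (g : Gtorus m) (x : Fin m → ℝ) (j : Fin m) : |signAct g x j| = |x j| := by
  unfold signAct; split <;> simp

lemma signAct_mul (g : Gtorus m) (c x : Fin m → ℝ) : signAct g (c * x) = c * signAct g x := by
  funext j; simp only [signAct, Pi.mul_apply]; split <;> ring

lemma mul_mem_bigZ {c x : Fin m → ℝ} (hc : ∀ j, c j ≠ 0) (hx : x ∈ bigZ m Sig) :
    c * x ∈ bigZ m Sig := by
  simpa [bigZ, hc] using hx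

lemma continuous_subQuot (K : AddSubgroup (Gtorus m))
    (hdown : ∀ σ ∈ Sig, ∀ τ ⊆ σ, τ ∈ Sig) : Continuous (subQuot m Sig K hdown) :=
  Continuous.quotient_map' (continuous_subtype_val.subtype_mk _) _

namespace RealMomentAngle

def faceNu (σ : Finset (Fin m)) (x : Fin m → ℝ) : unitInterval :=
  (Finset.univ \ σ).inf fun j => Set.projIcc 0 1 zero_le_one |x j|

open scoped Classical in
def nu (Sig : Set (Finset (Fin m))) (x : Fin m → ℝ) : unitInterval :=
  Sig.toFinset.sup (faceNu · x)

lemma continuous_nu (Sig : Set (Finset (Fin m))) : Continuous (nu Sig) :=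
  Continuous.finset_sup_apply fun _ _ => Continuous.finset_inf_apply fun j _ =>
    continuous_projIcc.comp (continuous_apply j).abs

lemma nu_congr_abs {x y : Fin m → ℝ} (h : ∀ j, |x j| = |y j|) : nu Sig x = nu Sig y := by
  simp only [nu, faceNu, h]

lemma faceNu_le_nu {σ : Finset (Fin m)} (hσ : σ ∈ Sig) (x : Fin m → ℝ) :
    faceNu σ x ≤ nu Sig x := by
  classical
  exact Finset.le_sup (f := (faceNu · x)) (Set.mem_toFinset.2 hσ)

lemma nu_pos {x : Fin m → ℝ} (hx : x ∈ bigZ m Sig) : 0 < (nu Sig x : ℝ) := by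
  classical
  have hface : (Finset.univ.filter fun j => x j = 0) ∈ Sig := hx
  have hmin : 0 < faceNu (Finset.univ.filter fun j => x j = 0) x := by
    rw [faceNu, Finset.lt_inf_iff zero_lt_one]
    intro j hj
    have : x j ≠ 0 := by simpa using hj
    show (0 : ℝ) < max 0 (min 1 |x j|)
    simp [abs_pos.2 this]
  exact hmin.trans_le (faceNu_le_nu hface x)

lemma exists_nu_le_abs {x : Fin m → ℝ} (hx : x ∈ bigZ m Sig) :
    ∃ σ ∈ Sig, ∀ j ∉ σ, (nu Sig x : ℝ) ≤ |x j| := by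
  classical
  have hne : Sig.toFinset.Nonempty := ⟨_, Set.mem_toFinset.2 hx⟩
  obtain ⟨σ, hσ, hsup⟩ := Sig.toFinset.exists_mem_eq_sup hne (faceNu · x)
  refine ⟨σ, Set.mem_toFinset.1 hσ, fun j hj => ?_⟩
  have hle : nu Sig x ≤ Set.projIcc 0 1 zero_le_one |x j| := by
    rw [nu, hsup]; exact Finset.inf_le (by simpa using hj)
  calc (nu Sig x : ℝ) ≤ Set.projIcc 0 1 zero_le_one |x j| := hle
    _ ≤ |x j| := max_le (abs_nonneg _) (min_le_right _ _)

lemma nu_eq_one {x : Fin m → ℝ} (hx : x ∈ Zma m Sig) : nu Sig x = 1 := by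
  obtain ⟨σ, hσ, -, hpm⟩ := mem_Zma_iff.1 hx
  refine top_le_iff.1 (le_trans (Finset.le_inf fun j hj => ?_) (faceNu_le_nu hσ x))
  have : |x j| = 1 := by rcases hpm j (by simpa using hj) with h | h <;> simp [h]
  rw [this, Set.projIcc_right]; rfl

def deformation (Sig : Set (Finset (Fin m))) (x : Fin m → ℝ) (t : ℝ) : Fin m → ℝ :=
  (fun j => 1 - t + t / max |x j| (nu Sig x)) * x

lemma deformation_zero (x : Fin m → ℝ) : deformation Sig x 0 = x := by
  funext j; simp [deformation]

lemma deformation_of_mem_Zma {x : Fin m → ℝ} (hx : x ∈ Zma m Sig) (t : ℝ) :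
    deformation Sig x t = x := by
  obtain ⟨-, -, hIcc, -⟩ := mem_Zma_iff.1 hx
  have hmax : ∀ j, max |x j| (nu Sig x : ℝ) = 1 := fun j => by
    rw [nu_eq_one hx, Set.Icc.coe_one]; exact max_eq_right (abs_le.2 (hIcc j))
  funext j
  simp [deformation, hmax]

lemma deformation_signAct (g : Gtorus m) (x : Fin m → ℝ) (t : ℝ) :
    deformation Sig (signAct g x) t = signAct g (deformation Sig x t) := by
  simp only [deformation, abs_signAct, nu_congr_abs (abs_signAct g x), signAct_mul]

lemma deformation_mem_bigZ {x : Fin m → ℝ} (hx : x ∈ bigZ m Sig) {t : ℝ}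
    (ht : t ∈ unitInterval) :
    deformation Sig x t ∈ bigZ m Sig := by
  refine mul_mem_bigZ (fun j => ?_) hx
  have hM : 0 < max |x j| (nu Sig x : ℝ) := lt_max_of_lt_right (nu_pos hx)
  rcases ht.1.eq_or_lt with rfl | ht₀
  · simp
  · have := div_pos ht₀ hM
    exact (by linarith [ht.2] : 0 < 1 - t + t / max |x j| (nu Sig x : ℝ)).ne'

lemma deformation_one_mem_Zma {x : Fin m → ℝ} (hx : x ∈ bigZ m Sig) :
    deformation Sig x 1 ∈ Zma m Sig := by
  obtain ⟨σ, hσ, hν⟩ := exists_nu_le_abs hx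
  have hM : ∀ j, 0 < max |x j| (nu Sig x : ℝ) := fun j => lt_max_of_lt_right (nu_pos hx)
  have hval : ∀ j, deformation Sig x 1 j = x j / max |x j| (nu Sig x : ℝ) := fun j => by
    simp [deformation, div_eq_inv_mul]
  refine mem_Zma_iff.2 ⟨σ, hσ, fun j => ?_, fun j hj => ?_⟩
  · rw [hval, Set.mem_Icc, ← abs_le, abs_div, abs_of_pos (hM j), div_le_one (hM j)]
    exact le_max_left _ _
  · have hx0 : x j ≠ 0 := fun h => by
      have := hν j hj; rw [h, abs_zero] at this; exact (nu_pos hx).not_ge this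
    rw [hval, max_eq_left (hν j hj)]
    rcases abs_cases (x j) with ⟨h, -⟩ | ⟨h, -⟩
    · left; rw [h, div_self hx0]
    · right; rw [h, div_neg, div_self hx0]

lemma continuous_deformation (Sig : Set (Finset (Fin m))) :
    Continuous fun p : bigZ m Sig × unitInterval => deformation Sig p.1 p.2 := by
  refine continuous_pi fun j => ?_
  have hxj : Continuous fun p : bigZ m Sig × unitInterval => p.1.1 j :=
    (continuous_apply j).comp (continuous_subtype_val.comp continuous_fst)
  have ht : Continuous fun p : bigZ m Sig × unitInterval => (p.2 : ℝ) := by fun_prop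
  have hM : Continuous fun p : bigZ m Sig × unitInterval => max |p.1.1 j| (nu Sig p.1 : ℝ) :=
    hxj.abs.max (continuous_subtype_val.comp ((continuous_nu Sig).comp (by fun_prop)))
  exact ((continuous_const.sub ht).add
    (ht.div hM fun p => (lt_max_of_lt_right (nu_pos p.1.2)).ne')).mul hxj

def bigZDeformation (Sig : Set (Finset (Fin m))) :
    C(bigZ m Sig × unitInterval, bigZ m Sig) where
  toFun p := ⟨deformation Sig p.1 p.2, deformation_mem_bigZ p.1.2 p.2.2⟩
  continuous_toFun := (continuous_deformation Sig).subtype_mk _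

lemma bigSetoid_bigZDeformation (K : AddSubgroup (Gtorus m)) (t : unitInterval)
    (x y : bigZ m Sig) (h : bigSetoid m Sig K x y) :
    bigSetoid m Sig K (bigZDeformation Sig (x, t)) (bigZDeformation Sig (y, t)) := by
  obtain ⟨g, hg, hxy⟩ := h
  exact ⟨g, hg, by rw [bigZDeformation, ContinuousMap.coe_mk, ← deformation_signAct, hxy]⟩

def bigZRetraction (K : AddSubgroup (Gtorus m)) :
    C(BigQuot m Sig K, RealToricSpace m Sig K) where
  toFun := Quotient.map (fun x => ⟨deformation Sig x.1 1, deformation_one_mem_Zma x.2⟩)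
    fun _ _ ⟨g, hg, hxy⟩ => ⟨g, hg, by rw [← deformation_signAct, hxy]⟩
  continuous_toFun := by
    have : Continuous fun x : bigZ m Sig => deformation Sig x.1 1 :=
      (continuous_deformation Sig).comp (continuous_id.prodMk (continuous_const (y := 1)))
    exact Continuous.quotient_map' (this.subtype_mk _) _

end RealMomentAngle

open RealMomentAngle

theorem strong_deformation_retract_bigZ_general (m : ℕ) (Sig : Set (Finset (Fin m)))
    (hdown : ∀ σ ∈ Sig, ∀ τ ⊆ σ, τ ∈ Sig)
    (K : AddSubgroup (Gtorus m)) :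
    (∃ F : C(BigQuot m Sig K × unitInterval, BigQuot m Sig K),
      (∀ z, F (z, 0) = z) ∧
      (∀ z, F (z, 1) ∈ Set.range (subQuot m Sig K hdown)) ∧
      (∀ w t, F (subQuot m Sig K hdown w, t) = subQuot m Sig K hdown w) ∧
      (∀ g z t, F (bigAct m Sig K g z, t) = bigAct m Sig K g (F (z, t)))) ∧
    Nonempty (ContinuousMap.HomotopyEquiv (RealToricSpace m Sig K) (BigQuot m Sig K)) := by
  let F := ContinuousMap.quotientProdMap (bigSetoid m Sig K) (bigZDeformation Sig)
    (bigSetoid_bigZDeformation K)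
  let r : C(BigQuot m Sig K, RealToricSpace m Sig K) := bigZRetraction K
  have hF₀ (z : BigQuot m Sig K) : F (z, 0) = z :=
    Quotient.inductionOn z fun x => congrArg _ (Subtype.ext (deformation_zero x.1))
  have hF₁ (z : BigQuot m Sig K) : F (z, 1) = subQuot m Sig K hdown (r z) :=
    Quotient.inductionOn z fun _ => rfl
  have hri (w : RealToricSpace m Sig K) : r (subQuot m Sig K hdown w) = w :=
    Quotient.inductionOn w fun z => congrArg _ (Subtype.ext (deformation_of_mem_Zma z.2 1))
  have hF_fix (w : RealToricSpace m Sig K) (t : unitInterval) :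
      F (subQuot m Sig K hdown w, t) = subQuot m Sig K hdown w :=
    Quotient.inductionOn w fun z => congrArg _ (Subtype.ext (deformation_of_mem_Zma z.2 t))
  have hF_equivariant (g : Gtorus m) (z : BigQuot m Sig K) (t : unitInterval) :
      F (bigAct m Sig K g z, t) = bigAct m Sig K g (F (z, t)) :=
    Quotient.inductionOn z fun x => congrArg _ (Subtype.ext (deformation_signAct g x.1 t))
  exact ⟨⟨F, hF₀, fun z => ⟨r z, (hF₁ z).symm⟩, hF_fix, hF_equivariant⟩,
    ⟨.ofDeformationRetract ⟨_, continuous_subQuot K hdown⟩ r hri F hF₀ hF₁⟩⟩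

/-- If `K ≤ G` acts freely on `Z_Σ`, then `Z_Σ/K ↪ 𝐙_Σ/K` is a strong
deformation retract, via a homotopy which can be chosen equivariant for the induced
action of `G/K`; in particular `Z_Σ/K → 𝐙_Σ/K` is a homotopy equivalence. -/
theorem strong_deformation_retract_bigZ (m : ℕ) (Sig : Set (Finset (Fin m)))
    (hempty : ∅ ∈ Sig) (hdown : ∀ σ ∈ Sig, ∀ τ ⊆ σ, τ ∈ Sig)
    (K : AddSubgroup (Gtorus m))
    (hfree : ∀ g ∈ K, ∀ x ∈ Zma m Sig, signAct g x = x → g = 0) :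
    (∃ F : C(BigQuot m Sig K × unitInterval, BigQuot m Sig K),
      (∀ z, F (z, 0) = z) ∧
      (∀ z, F (z, 1) ∈ Set.range (subQuot m Sig K hdown)) ∧
      (∀ w t, F (subQuot m Sig K hdown w, t) = subQuot m Sig K hdown w) ∧
      (∀ g z t, F (bigAct m Sig K g z, t) = bigAct m Sig K g (F (z, t)))) ∧
    Nonempty (ContinuousMap.HomotopyEquiv (RealToricSpace m Sig K) (BigQuot m Sig K)) :=
  strong_deformation_retract_bigZ_general m Sig hdown K
end
end
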